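/- arXiv:1806.05715 — 5 statements merged into one kernel-verified Lean document; each statement's English description precedes it below -/
import Mathlib

section
/- The squared minimum Euclidean distance of the Construction C constellation from nonzero linear binary codes C_1, ..., C_L ⊆ F_2^n equals min{d_H(C_1), 4 d_H(C_2), ..., 4^{L-1} d_H(C_L), 4^L}. -/
/-- The natural embedding of `F_2^n` into `ℤ^n`. -/
def psiZ {n : ℕ} (c : Fin n → ZMod 2) : Fin n → ℤ := fun i => ((c i).val : ℤ)

/-- Hamming weight of a binary word. -/
def hamWt {n : ℕ} (c : Fin n → ZMod 2) : ℕ :=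
  (Finset.univ.filter fun i => c i ≠ 0).card

/-- Minimum Hamming distance of a linear code: the minimum Hamming weight of a
nonzero codeword. -/
noncomputable def dH {n : ℕ} (C : Submodule (ZMod 2) (Fin n → ZMod 2)) : ℕ :=
  sInf {w | ∃ c ∈ C, c ≠ 0 ∧ hamWt c = w}

/-- The Construction C constellation `ψ(C₁) + 2ψ(C₂) + ⋯ + 2^{L-1}ψ(C_L) + 2^L ℤ^n`. -/
def constructionC {n L : ℕ} (C : Fin L → Submodule (ZMod 2) (Fin n → ZMod 2)) :
    Set (Fin n → ℤ) :=
  {x | ∃ c : Fin L → (Fin n → ZMod 2), (∀ i, c i ∈ C i) ∧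
        ∃ z : Fin n → ℤ, x = (∑ i : Fin L, ((2 : ℤ) ^ (i : ℕ)) • psiZ (c i)) + ((2 : ℤ) ^ L) • z}

/-- Squared Euclidean distance on `ℤ^n`, as a natural number. -/
def sqDistN {n : ℕ} (x y : Fin n → ℤ) : ℕ := ∑ i, (x i - y i).natAbs ^ 2

lemma psiZ_zero {n : ℕ} : psiZ (0 : Fin n → ZMod 2) = 0 := by
  funext j; simp [psiZ]

lemma zmod2_cases (a : ZMod 2) : a = 0 ∨ a = 1 := by revert a; decide

lemma hamWt_eq_sum {n : ℕ} (c : Fin n → ZMod 2) :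
    hamWt c = ∑ j, (c j).val := by
  rw [hamWt, Finset.card_filter]
  refine Finset.sum_congr rfl fun j _ => ?_
  rcases zmod2_cases (c j) with h | h <;> simp [h] <;> decide

lemma zero_mem_constructionC {n L : ℕ} (C : Fin L → Submodule (ZMod 2) (Fin n → ZMod 2)) :
    (0 : Fin n → ℤ) ∈ constructionC C := by
  refine ⟨0, fun i => (C i).zero_mem, 0, ?_⟩
  simp [psiZ_zero]

lemma scaled_mem_constructionC {n L : ℕ} (C : Fin L → Submodule (ZMod 2) (Fin n → ZMod 2))
    (k : Fin L) (c : Fin n → ZMod 2) (hc : c ∈ C k) :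
    ((2 : ℤ) ^ (k : ℕ)) • psiZ c ∈ constructionC C := by
  refine ⟨fun i => if i = k then c else 0, fun i => ?_, 0, ?_⟩
  · by_cases h : i = k <;> simp [h, hc, (C i).zero_mem]
  · rw [Finset.sum_eq_single k]
    · simp
    · intro i _ hik; simp [hik, psiZ_zero]
    · simp

lemma twoL_mem_constructionC {n L : ℕ} (C : Fin L → Submodule (ZMod 2) (Fin n → ZMod 2))
    (z : Fin n → ℤ) : ((2 : ℤ) ^ L) • z ∈ constructionC C := by
  refine ⟨0, fun i => (C i).zero_mem, z, ?_⟩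
  simp [psiZ_zero]

lemma sqDistN_zero_scaled {n : ℕ} (k : ℕ) (c : Fin n → ZMod 2) :
    sqDistN (((2 : ℤ) ^ k) • psiZ c) 0 = 4 ^ k * hamWt c := by
  rw [sqDistN, hamWt_eq_sum, Finset.mul_sum]
  refine Finset.sum_congr rfl fun j _ => ?_
  have hv : (ZMod.val (1 : ZMod 2)) = 1 := rfl
  rcases zmod2_cases (c j) with h | h <;>
    simp [psiZ, h, hv, Int.natAbs_mul, Int.natAbs_pow, mul_pow]
  rw [show (4:ℕ) = 2^2 from rfl, ← pow_mul, mul_comm, pow_mul]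

lemma val_diff (a b : ZMod 2) (h : a ≠ b) :
    ((a.val : ℤ) - (b.val : ℤ) = 1) ∨ ((a.val : ℤ) - (b.val : ℤ) = -1) := by
  revert a b; decide

lemma key_lower {n L : ℕ} (C : Fin L → Submodule (ZMod 2) (Fin n → ZMod 2))
    {x y : Fin n → ℤ} (hx : x ∈ constructionC C) (hy : y ∈ constructionC C) (hxy : x ≠ y) :
    sInf ({4 ^ L} ∪ {m : ℕ | ∃ i : Fin L, m = 4 ^ (i : ℕ) * dH (C i)}) ≤ sqDistN x y := by
  obtain ⟨c, hc, z, hxeq⟩ := hx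
  obtain ⟨c', hc', z', hyeq⟩ := hy
  have coord : ∀ j, x j - y j =
      (∑ i : Fin L, (2 : ℤ) ^ (i : ℕ) * (((c i j).val : ℤ) - ((c' i j).val : ℤ)))
        + (2 : ℤ) ^ L * (z j - z' j) := by
    intro j
    rw [hxeq, hyeq]
    simp only [Pi.add_apply, Pi.smul_apply, Finset.sum_apply, smul_eq_mul, psiZ, mul_sub]
    rw [Finset.sum_sub_distrib]
    ring
  by_cases hall : ∀ i, c i = c' i
  · -- purely the 2^L ℤ^n part differs
    obtain ⟨j, hj⟩ := Function.ne_iff.mp hxy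
    have hcj : x j - y j = (2 : ℤ) ^ L * (z j - z' j) := by
      rw [coord j]
      simp [hall]
    have hzj : z j - z' j ≠ 0 := by
      intro h0
      apply hj
      have := hcj
      rw [h0, mul_zero] at this
      omega
    have hterm : 4 ^ L ≤ (x j - y j).natAbs ^ 2 := by
      rw [hcj, Int.natAbs_mul, mul_pow]
      have h1 : (((2:ℤ) ^ L).natAbs) ^ 2 = 4 ^ L := by
        simp [Int.natAbs_pow]
        rw [show (4:ℕ) = 2^2 from rfl, ← pow_mul, mul_comm, pow_mul]
      have h2 : 1 ≤ (z j - z' j).natAbs ^ 2 := by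
        have h0 : (z j - z' j).natAbs ≠ 0 := Int.natAbs_ne_zero.mpr hzj
        exact Nat.one_le_iff_ne_zero.mpr (pow_ne_zero _ h0)
      calc 4 ^ L = 4 ^ L * 1 := (mul_one _).symm
        _ ≤ ((2:ℤ) ^ L).natAbs ^ 2 * (z j - z' j).natAbs ^ 2 := by
            rw [h1]; exact Nat.mul_le_mul_left _ h2
    calc sInf ({4 ^ L} ∪ {m : ℕ | ∃ i : Fin L, m = 4 ^ (i : ℕ) * dH (C i)}) ≤ 4 ^ L :=
          Nat.sInf_le (Set.mem_union_left _ rfl)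
      _ ≤ (x j - y j).natAbs ^ 2 := hterm
      _ ≤ sqDistN x y := by
            rw [sqDistN]
            exact Finset.single_le_sum (f := fun i => (x i - y i).natAbs ^ 2)
              (fun i _ => Nat.zero_le _) (Finset.mem_univ j)
  · -- there is a least level where the codewords differ
    push_neg at hall
    have hSne : (Finset.univ.filter fun i => c i ≠ c' i).Nonempty := by
      obtain ⟨i, hi⟩ := hall
      exact ⟨i, by simp [hi]⟩
    set k := (Finset.univ.filter fun i => c i ≠ c' i).min' hSne with hkdef
    have hk : c k ≠ c' k := by
      have := Finset.min'_mem _ hSne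
      simpa using this
    have hmin : ∀ i : Fin L, i < k → c i = c' i := by
      intro i hi
      by_contra h
      have hmem : i ∈ Finset.univ.filter fun i => c i ≠ c' i := by simp [h]
      exact absurd (Finset.min'_le _ _ hmem) (not_le.mpr hi)
    set w : Fin n → ZMod 2 := c k - c' k with hwdef
    have hw : w ∈ C k := (C k).sub_mem (hc k) (hc' k)
    have hw0 : w ≠ 0 := sub_ne_zero.mpr hk
    have hdH : dH (C k) ≤ hamWt w := Nat.sInf_le ⟨w, hw, hw0, rfl⟩
    -- per-coordinate bound
    have hterm : ∀ j : Fin n, w j ≠ 0 → 4 ^ (k : ℕ) ≤ (x j - y j).natAbs ^ 2 := by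
      intro j hwj
      have hjk : c k j ≠ c' k j := by
        intro h; apply hwj; simp [hwdef, h]
      set e : ℤ := ((c k j).val : ℤ) - ((c' k j).val : ℤ) with hedef
      have hdvd : (2 : ℤ) ^ ((k : ℕ) + 1) ∣ (x j - y j - 2 ^ (k : ℕ) * e) := by
        rw [coord j]
        have hsplit : (∑ i : Fin L, (2 : ℤ) ^ (i : ℕ) * (((c i j).val : ℤ) - ((c' i j).val : ℤ)))
            + (2 : ℤ) ^ L * (z j - z' j) - 2 ^ (k : ℕ) * e =
            (∑ i ∈ Finset.univ.erase k, (2 : ℤ) ^ (i : ℕ) * (((c i j).val : ℤ) - ((c' i j).val : ℤ)))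
            + (2 : ℤ) ^ L * (z j - z' j) := by
          rw [← Finset.sum_erase_add _ _ (Finset.mem_univ k)]
          ring
        rw [hsplit]
        apply dvd_add
        · apply Finset.dvd_sum
          intro i hi
          have hik : i ≠ k := Finset.ne_of_mem_erase hi
          rcases lt_or_gt_of_ne hik with h | h
          · rw [hmin i h]
            simp
          · have : (k : ℕ) + 1 ≤ (i : ℕ) := h
            exact Dvd.dvd.mul_right (pow_dvd_pow 2 this) _
        · have : (k : ℕ) + 1 ≤ L := k.isLt
          exact Dvd.dvd.mul_right (pow_dvd_pow 2 this) _
      obtain ⟨f, hf⟩ := hdvd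
      have hfactor : x j - y j = 2 ^ (k : ℕ) * (e + 2 * f) := by
        have : x j - y j = 2 ^ (k : ℕ) * e + 2 ^ ((k : ℕ) + 1) * f := by linarith
        rw [this, pow_succ]
        ring
      have hne : e + 2 * f ≠ 0 := by
        rcases val_diff _ _ hjk with h | h <;> rw [← hedef] at h <;> omega
      have h2 : 1 ≤ (e + 2 * f).natAbs ^ 2 := by
        have h0 : (e + 2 * f).natAbs ≠ 0 := Int.natAbs_ne_zero.mpr hne
        exact Nat.one_le_iff_ne_zero.mpr (pow_ne_zero _ h0)
      rw [hfactor, Int.natAbs_mul, mul_pow]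
      have h1 : (((2:ℤ) ^ (k : ℕ)).natAbs) ^ 2 = 4 ^ (k : ℕ) := by
        simp [Int.natAbs_pow]
        rw [show (4:ℕ) = 2^2 from rfl, ← pow_mul, mul_comm, pow_mul]
      calc 4 ^ (k : ℕ) = 4 ^ (k : ℕ) * 1 := (mul_one _).symm
        _ ≤ ((2:ℤ) ^ (k : ℕ)).natAbs ^ 2 * (e + 2 * f).natAbs ^ 2 := by
            rw [h1]; exact Nat.mul_le_mul_left _ h2
    -- sum the per-coordinate bounds
    have hsum : 4 ^ (k : ℕ) * hamWt w ≤ sqDistN x y := by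
      rw [hamWt, sqDistN]
      calc 4 ^ (k : ℕ) * (Finset.univ.filter fun j => w j ≠ 0).card
          = ∑ j ∈ Finset.univ.filter fun j => w j ≠ 0, 4 ^ (k : ℕ) := by
            rw [Finset.sum_const, smul_eq_mul, mul_comm]
        _ ≤ ∑ j ∈ Finset.univ.filter fun j => w j ≠ 0, (x j - y j).natAbs ^ 2 := by
            apply Finset.sum_le_sum
            intro j hj
            exact hterm j (by simpa using hj)
        _ ≤ ∑ j : Fin n, (x j - y j).natAbs ^ 2 := by
            apply Finset.sum_le_sum_of_subset (Finset.filter_subset _ _)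
    calc sInf ({4 ^ L} ∪ {m : ℕ | ∃ i : Fin L, m = 4 ^ (i : ℕ) * dH (C i)})
        ≤ 4 ^ (k : ℕ) * dH (C k) := Nat.sInf_le (Set.mem_union_right _ ⟨k, rfl⟩)
      _ ≤ 4 ^ (k : ℕ) * hamWt w := Nat.mul_le_mul_left _ hdH
      _ ≤ sqDistN x y := hsum
lemma single_ne_zero' {n L : ℕ} (hn : 0 < n) :
    ((2 : ℤ) ^ L) • (fun j : Fin n => if j = ⟨0, hn⟩ then (1:ℤ) else 0) ≠ 0 := by
  intro h
  have := congrFun h ⟨0, hn⟩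
  simp at this

lemma sqDistN_twoL {n : ℕ} (hn : 0 < n) (L : ℕ) :
    sqDistN (((2 : ℤ) ^ L) • (fun j : Fin n => if j = ⟨0, hn⟩ then (1:ℤ) else 0)) 0 = 4 ^ L := by
  rw [sqDistN]
  rw [Finset.sum_eq_single (⟨0, hn⟩ : Fin n)]
  · simp [Int.natAbs_pow]
    rw [show (4:ℕ) = 2^2 from rfl, ← pow_mul, mul_comm, pow_mul]
  · intro j _ hj
    simp [hj]
  · simp

/-- The squared minimum Euclidean distance of the Construction C constellation built
from nonzero linear binary codes `C₁, …, C_L ⊆ F_2^n` equals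
`min {d_H(C₁), 4 d_H(C₂), …, 4^{L-1} d_H(C_L), 4^L}`. -/
theorem constructionC_dmin_eq {n L : ℕ} (hn : 0 < n)
    (C : Fin L → Submodule (ZMod 2) (Fin n → ZMod 2))
    (hC : ∀ i, ∃ c ∈ C i, c ≠ 0) :
    sInf {d : ℕ | ∃ x ∈ constructionC C, ∃ y ∈ constructionC C, x ≠ y ∧ sqDistN x y = d}
      = sInf ({4 ^ L} ∪ {m : ℕ | ∃ i : Fin L, m = 4 ^ (i : ℕ) * dH (C i)}) := by
  set S := {d : ℕ | ∃ x ∈ constructionC C, ∃ y ∈ constructionC C, x ≠ y ∧ sqDistN x y = d}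
    with hSdef
  set T := ({4 ^ L} ∪ {m : ℕ | ∃ i : Fin L, m = 4 ^ (i : ℕ) * dH (C i)} : Set ℕ) with hTdef
  have hTS : T ⊆ S := by
    intro d hd
    rcases hd with hd | ⟨i, hd⟩
    · -- d = 4^L
      rw [Set.mem_singleton_iff] at hd
      subst hd
      exact ⟨_, twoL_mem_constructionC C _, 0, zero_mem_constructionC C,
        single_ne_zero' hn, sqDistN_twoL hn L⟩
    · -- d = 4^i * dH (C i)
      subst hd
      obtain ⟨c₀, hmem, hne0, hwt⟩ :
          dH (C i) ∈ {w | ∃ c ∈ C i, c ≠ 0 ∧ hamWt c = w} := by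
        obtain ⟨c, hc, hc0⟩ := hC i
        exact Nat.sInf_mem ⟨hamWt c, c, hc, hc0, rfl⟩
      refine ⟨((2 : ℤ) ^ (i : ℕ)) • psiZ c₀, scaled_mem_constructionC C i c₀ hmem,
        0, zero_mem_constructionC C, ?_, by rw [sqDistN_zero_scaled, hwt]⟩
      intro h
      apply hne0
      funext j
      have := congrFun h j
      simp only [Pi.smul_apply, smul_eq_mul, Pi.zero_apply, psiZ] at this
      have h2 : ((c₀ j).val : ℤ) = 0 := by
        have hp : (0:ℤ) < 2 ^ (i:ℕ) := by positivity
        rcases mul_eq_zero.mp this with h | h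
        · exact absurd h (ne_of_gt hp)
        · exact h
      have : (c₀ j).val = 0 := by exact_mod_cast h2
      simpa [ZMod.val_eq_zero] using this
  have hTne : T.Nonempty := ⟨4 ^ L, Set.mem_union_left _ rfl⟩
  have hSne : S.Nonempty := ⟨4 ^ L, hTS (Set.mem_union_left _ rfl)⟩
  apply le_antisymm
  · exact Nat.sInf_le (hTS (Nat.sInf_mem hTne))
  · apply le_csInf hSne
    rintro d ⟨x, hx, y, hy, hxy, rfl⟩
    exact key_lower C hx hy hxy
end

section
/- Let Λ ⊆ R^n be a lattice symmetric with respect to all coordinate axes (i.e., if (x_1,...,x_n) ∈ Λ then flipping the sign of any single coordinate gives a point of Λ), and let C ⊆ F_2^n be a linear binary code. Then the constellation Γ = Λ + ψ(C) is geometrically uniform: for any two points x, y ∈ Γ there is an isometry T of R^n with T(x) = y and T(Γ) = Γ. -/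
/-- The natural embedding of `F_2^n` into `ℝ^n` (Euclidean space). -/
noncomputable def psiR {n : ℕ} (c : Fin n → ZMod 2) : EuclideanSpace ℝ (Fin n) :=
  WithLp.toLp 2 (fun i => ((c i).val : ℝ))

/-- Sign flip of the `i`-th coordinate. -/
noncomputable def flipCoord {n : ℕ} (i : Fin n) (x : EuclideanSpace ℝ (Fin n)) :
    EuclideanSpace ℝ (Fin n) :=
  WithLp.toLp 2 (fun j => if j = i then -x j else x j)

/-!
Every point `l + ψ(c)` of `Γ = Λ + ψ(C)` is the image of `0` under the isometry
`v ↦ l + ψ(c) + σ_c v`, where `σ_c` flips the signs of the coordinates in the support of `c`.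
It maps `Γ` into itself: `σ_c` preserves `Λ`, and bitwise `a + (1 - 2a) b = a ⊕ b` gives
`ψ(c) + σ_c ψ(c') = ψ(c + c')`. Its inverse is an isometry of the same form, so it maps `Γ` onto
`Γ`, and composing the isometry for `y` with the inverse of the one for `x` moves `x` to `y`.
-/

def IsGeometricallyUniform {E : Type*} [PseudoEMetricSpace E] (Γ : Set E) : Prop :=
  ∀ x ∈ Γ, ∀ y ∈ Γ, ∃ T : E ≃ᵢ E, T x = y ∧ T '' Γ = Γ

lemma IsGeometricallyUniform.of_basepoint {E : Type*} [PseudoEMetricSpace E]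
    {Γ : Set E} (x₀ : E) (h : ∀ x ∈ Γ, ∃ T : E ≃ᵢ E, T x₀ = x ∧ T '' Γ = Γ) :
    IsGeometricallyUniform Γ := by
  intro x hx y hy
  obtain ⟨S, rfl, hS⟩ := h x hx
  obtain ⟨T, rfl, hT⟩ := h y hy
  refine ⟨S.symm.trans T, by simp, ?_⟩
  have hS' : S.symm '' Γ = Γ := (S.toEquiv.eq_image_iff_symm_image_eq Γ Γ).1 hS.symm
  rw [show ⇑(S.symm.trans T) = T ∘ S.symm from rfl, Set.image_comp, hS', hT]

variable {n : ℕ}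

noncomputable def flipCoords (s : Finset (Fin n)) :
    EuclideanSpace ℝ (Fin n) ≃ₗᵢ[ℝ] EuclideanSpace ℝ (Fin n) :=
  LinearIsometryEquiv.piLpCongrRight 2 fun i =>
    if i ∈ s then LinearIsometryEquiv.neg ℝ else LinearIsometryEquiv.refl ℝ ℝ

lemma flipCoords_apply (s : Finset (Fin n)) (x : EuclideanSpace ℝ (Fin n)) (j : Fin n) :
    flipCoords s x j = if j ∈ s then -x j else x j := by
  unfold flipCoords
  split_ifs <;> simp [*]

lemma flipCoords_flipCoords (s : Finset (Fin n)) (x : EuclideanSpace ℝ (Fin n)) :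
    flipCoords s (flipCoords s x) = x := by
  ext j
  simp only [flipCoords_apply]
  split_ifs <;> simp

lemma flipCoords_insert {i : Fin n} {s : Finset (Fin n)} (hi : i ∉ s)
    (x : EuclideanSpace ℝ (Fin n)) :
    flipCoords (insert i s) x = flipCoord i (flipCoords s x) := by
  ext j
  by_cases hj : j = i
  · subst hj; simp [flipCoord, flipCoords_apply, hi]
  · simp [flipCoord, flipCoords_apply, hj]

lemma flipCoords_mem {Λ : AddSubgroup (EuclideanSpace ℝ (Fin n))}
    (hsym : ∀ x ∈ Λ, ∀ i : Fin n, flipCoord i x ∈ Λ) (s : Finset (Fin n))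
    {x : EuclideanSpace ℝ (Fin n)} (hx : x ∈ Λ) : flipCoords s x ∈ Λ := by
  induction s using Finset.induction_on with
  | empty => convert hx; ext j; simp [flipCoords_apply]
  | insert i s hi ih => rw [flipCoords_insert hi]; exact hsym _ ih i

def oneCoords (c : Fin n → ZMod 2) : Finset (Fin n) :=
  Finset.univ.filter fun i => c i = 1

lemma zmodTwo_val_add (a b : ZMod 2) :
    ((a + b).val : ℝ) = a.val + if a = 1 then -(b.val : ℝ) else b.val := by
  have : ∀ a : ZMod 2, a = 0 ∨ a = 1 := by decide
  rcases this a with rfl | rfl <;> rcases this b with rfl | rfl <;>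
    simp [show (1 + 1 : ZMod 2) = 0 from rfl]

lemma psiR_zero : psiR (0 : Fin n → ZMod 2) = 0 := by
  ext i; simp [psiR]

lemma psiR_add (c c' : Fin n → ZMod 2) :
    psiR (c + c') = psiR c + flipCoords (oneCoords c) (psiR c') := by
  ext i
  simp only [psiR, PiLp.add_apply, Pi.add_apply, flipCoords_apply, oneCoords, Finset.mem_filter,
    Finset.mem_univ, true_and]
  exact zmodTwo_val_add (c i) (c' i)

def latticeCode (Λ : AddSubgroup (EuclideanSpace ℝ (Fin n)))
    (C : Submodule (ZMod 2) (Fin n → ZMod 2)) : Set (EuclideanSpace ℝ (Fin n)) :=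
  {v | ∃ l ∈ Λ, ∃ c ∈ C, v = l + psiR c}

noncomputable def codeIsometry (l : EuclideanSpace ℝ (Fin n)) (c : Fin n → ZMod 2) :
    EuclideanSpace ℝ (Fin n) ≃ᵢ EuclideanSpace ℝ (Fin n) :=
  (flipCoords (oneCoords c)).toIsometryEquiv.trans (IsometryEquiv.addLeft (l + psiR c))

lemma codeIsometry_apply (l : EuclideanSpace ℝ (Fin n)) (c : Fin n → ZMod 2)
    (v : EuclideanSpace ℝ (Fin n)) :
    codeIsometry l c v = l + psiR c + flipCoords (oneCoords c) v := rfl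

lemma codeIsometry_symm_apply (l : EuclideanSpace ℝ (Fin n)) (c : Fin n → ZMod 2)
    (w : EuclideanSpace ℝ (Fin n)) :
    (codeIsometry l c).symm w = codeIsometry (-flipCoords (oneCoords c) l) c w := by
  have hc : psiR c + flipCoords (oneCoords c) (psiR c) = 0 := by
    rw [← psiR_add, ZModModule.add_self, psiR_zero]
  rw [IsometryEquiv.symm_apply_eq, codeIsometry_apply, codeIsometry_apply, map_add, map_add,
    map_neg, flipCoords_flipCoords, flipCoords_flipCoords]
  linear_combination (norm := module) -hc

section

variable {Λ : AddSubgroup (EuclideanSpace ℝ (Fin n))} {C : Submodule (ZMod 2) (Fin n → ZMod 2)}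
  {l : EuclideanSpace ℝ (Fin n)} {c : Fin n → ZMod 2}

lemma mapsTo_codeIsometry (hsym : ∀ x ∈ Λ, ∀ i : Fin n, flipCoord i x ∈ Λ) (hl : l ∈ Λ)
    (hc : c ∈ C) : Set.MapsTo (codeIsometry l c) (latticeCode Λ C) (latticeCode Λ C) := by
  rintro _ ⟨l', hl', c', hc', rfl⟩
  refine ⟨l + flipCoords (oneCoords c) l', Λ.add_mem hl (flipCoords_mem hsym _ hl'),
    c + c', C.add_mem hc hc', ?_⟩
  rw [codeIsometry_apply, map_add, psiR_add]
  abel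

lemma codeIsometry_image_latticeCode (hsym : ∀ x ∈ Λ, ∀ i : Fin n, flipCoord i x ∈ Λ)
    (hl : l ∈ Λ) (hc : c ∈ C) : codeIsometry l c '' latticeCode Λ C = latticeCode Λ C := by
  refine (mapsTo_codeIsometry hsym hl hc).image_subset.antisymm fun w hw =>
    ⟨(codeIsometry l c).symm w, ?_, (codeIsometry l c).apply_symm_apply w⟩
  rw [codeIsometry_symm_apply]
  exact mapsTo_codeIsometry hsym (Λ.neg_mem (flipCoords_mem hsym _ hl)) hc hw

end

theorem geometricallyUniform_lattice_add_code_general {n : ℕ}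
    (Λ : AddSubgroup (EuclideanSpace ℝ (Fin n)))
    (hsym : ∀ x ∈ Λ, ∀ i : Fin n, flipCoord i x ∈ Λ)
    (C : Submodule (ZMod 2) (Fin n → ZMod 2)) :
    ∀ x ∈ {v : EuclideanSpace ℝ (Fin n) | ∃ l ∈ Λ, ∃ c ∈ C, v = l + psiR c},
    ∀ y ∈ {v : EuclideanSpace ℝ (Fin n) | ∃ l ∈ Λ, ∃ c ∈ C, v = l + psiR c},
      ∃ T : EuclideanSpace ℝ (Fin n) ≃ᵢ EuclideanSpace ℝ (Fin n),
        T x = y ∧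
        T '' {v : EuclideanSpace ℝ (Fin n) | ∃ l ∈ Λ, ∃ c ∈ C, v = l + psiR c}
          = {v : EuclideanSpace ℝ (Fin n) | ∃ l ∈ Λ, ∃ c ∈ C, v = l + psiR c} := by
  refine IsGeometricallyUniform.of_basepoint (Γ := latticeCode Λ C) 0 ?_
  rintro _ ⟨l, hl, c, hc, rfl⟩
  refine ⟨codeIsometry l c, ?_, codeIsometry_image_latticeCode hsym hl hc⟩
  rw [codeIsometry_apply, map_zero, add_zero]

/-- If `Λ ⊆ ℝ^n` is a lattice (a discrete additive subgroup) symmetric with respect to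
all coordinate axes, and `C ⊆ F_2^n` is a linear binary code, then `Γ = Λ + ψ(C)` is
geometrically uniform: for any `x, y ∈ Γ` there is an isometry `T` of `ℝ^n` with
`T x = y` and `T '' Γ = Γ`. -/
theorem geometricallyUniform_lattice_add_code {n : ℕ}
    (Λ : AddSubgroup (EuclideanSpace ℝ (Fin n)))
    (hdisc : DiscreteTopology Λ)
    (hsym : ∀ x ∈ Λ, ∀ i : Fin n, flipCoord i x ∈ Λ)
    (C : Submodule (ZMod 2) (Fin n → ZMod 2)) :
    ∀ x ∈ {v : EuclideanSpace ℝ (Fin n) | ∃ l ∈ Λ, ∃ c ∈ C, v = l + psiR c},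
    ∀ y ∈ {v : EuclideanSpace ℝ (Fin n) | ∃ l ∈ Λ, ∃ c ∈ C, v = l + psiR c},
      ∃ T : EuclideanSpace ℝ (Fin n) ≃ᵢ EuclideanSpace ℝ (Fin n),
        T x = y ∧
        T '' {v : EuclideanSpace ℝ (Fin n) | ∃ l ∈ Λ, ∃ c ∈ C, v = l + psiR c}
          = {v : EuclideanSpace ℝ (Fin n) | ∃ l ∈ Λ, ∃ c ∈ C, v = l + psiR c} :=
  geometricallyUniform_lattice_add_code_general Λ hsym C
end

section
/- Every 2-level Construction C constellation Γ_C = ψ(C_1) + 2ψ(C_2) + 4Z^n built from linear binary codes C_1, C_2 ⊆ F_2^n is geometrically uniform. -/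
/-- The natural embedding of `ℤ^n` into `ℝ^n` (Euclidean space). -/
noncomputable def embZ {n : ℕ} (z : Fin n → ℤ) : EuclideanSpace ℝ (Fin n) :=
  WithLp.toLp 2 (fun i => (z i : ℝ))

/-- The 2-level Construction C constellation `ψ(C₁) + 2ψ(C₂) + 4ℤ^n`. -/
noncomputable def gammaC2 {n : ℕ} (C₁ C₂ : Submodule (ZMod 2) (Fin n → ZMod 2)) :
    Set (EuclideanSpace ℝ (Fin n)) :=
  {v | ∃ c₁ ∈ C₁, ∃ c₂ ∈ C₂, ∃ z : Fin n → ℤ,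
        v = psiR c₁ + (2 : ℝ) • psiR c₂ + (4 : ℝ) • embZ z}


/-!
A point of `Γ_C` is an integer vector whose residue mod 4 is `c₁ + 2 c₂` coordinatewise, with
`cᵢ ∈ Cᵢ`. For `x ∈ Γ_C` with residue `a₁ + 2 a₂`, let `T_x v = ε ⊙ v + x`, where `ε` negates
the coordinates on which `a₁ = 1`. Coordinatewise `±(γ + 2γ₂) + (α + 2α₂) ≡ (γ + α) + 2(γ₂ + α₂)`
mod 4, so by linearity of `C₁, C₂` the isometry `T_x` maps `Γ_C` onto itself, and it sends `0` to
`x`. Then `T_y ∘ T_x⁻¹` carries `x` to `y`.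
-/

theorem exists_isometryEquiv_image_eq_of_basepoint {X : Type*} [PseudoEMetricSpace X]
    {S : Set X} (p : X) (h : ∀ x ∈ S, ∃ T : X ≃ᵢ X, T p = x ∧ T '' S = S) :
    ∀ x ∈ S, ∀ y ∈ S, ∃ T : X ≃ᵢ X, T x = y ∧ T '' S = S := by
  intro x hx y hy
  obtain ⟨Tx, hTx, hTxS⟩ := h x hx
  obtain ⟨Ty, hTy, hTyS⟩ := h y hy
  refine ⟨Tx.symm.trans Ty, by simp [← hTx, hTy], ?_⟩
  have hTxS_symm : Tx.symm '' S = S := by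
    rw [IsometryEquiv.image_symm]
    nth_rw 1 [← hTxS]
    exact Set.preimage_image_eq S Tx.injective
  change (Ty ∘ Tx.symm) '' S = S
  rw [Set.image_comp, hTxS_symm, hTyS]

def digits (c₁ c₂ : ZMod 2) : ZMod 4 := c₁.val + 2 * c₂.val

theorem ite_neg_digits_add_digits (α α₂ γ γ₂ : ZMod 2) :
    (if α = 1 then -digits γ γ₂ else digits γ γ₂) + digits α α₂ = digits (γ + α) (γ₂ + α₂) := by
  revert α α₂ γ γ₂; decide

theorem ite_neg_digits_sub_digits (α α₂ γ γ₂ : ZMod 2) :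
    (if α = 1 then -(digits γ γ₂ - digits α α₂) else digits γ γ₂ - digits α α₂) =
      digits (γ + α) (γ₂ + α₂) := by
  revert α α₂ γ γ₂; decide

theorem intCast_eq_digits_iff (c₁ c₂ : ZMod 2) (m : ℤ) :
    (m : ZMod 4) = digits c₁ c₂ ↔ ∃ z : ℤ, m = c₁.val + 2 * c₂.val + 4 * z := by
  rw [digits, show ((c₁.val : ZMod 4) + 2 * c₂.val) = ((c₁.val + 2 * c₂.val : ℤ) : ZMod 4) by
    push_cast; rfl, ZMod.intCast_eq_intCast_iff_dvd_sub]
  constructor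
  · rintro ⟨z, hz⟩
    exact ⟨-z, by push_cast at hz; linarith⟩
  · rintro ⟨z, rfl⟩
    exact ⟨-z, by push_cast; ring⟩

section

variable {n : ℕ} {C₁ C₂ : Submodule (ZMod 2) (Fin n → ZMod 2)}

theorem mem_gammaC2_iff {v : EuclideanSpace ℝ (Fin n)} :
    v ∈ gammaC2 C₁ C₂ ↔ ∃ c₁ ∈ C₁, ∃ c₂ ∈ C₂, ∃ m : Fin n → ℤ,
      v = embZ m ∧ ∀ i, (m i : ZMod 4) = digits (c₁ i) (c₂ i) := by
  simp only [intCast_eq_digits_iff]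
  constructor
  · rintro ⟨c₁, hc₁, c₂, hc₂, z, rfl⟩
    refine ⟨c₁, hc₁, c₂, hc₂, fun i => (c₁ i).val + 2 * (c₂ i).val + 4 * z i, ?_,
      fun i => ⟨z i, rfl⟩⟩
    ext i
    simp [psiR, embZ]
  · rintro ⟨c₁, hc₁, c₂, hc₂, m, rfl, hm⟩
    choose z hz using hm
    refine ⟨c₁, hc₁, c₂, hc₂, z, ?_⟩
    ext i
    simp [psiR, embZ, hz i]

theorem embZ_add (m m' : Fin n → ℤ) : embZ (m + m') = embZ m + embZ m' := by
  ext i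
  simp [embZ]

theorem embZ_sub (m m' : Fin n → ℤ) : embZ (m - m') = embZ m - embZ m' := by
  ext i
  simp [embZ]

noncomputable def signFlip (a : Fin n → ZMod 2) :
    EuclideanSpace ℝ (Fin n) ≃ₗᵢ[ℝ] EuclideanSpace ℝ (Fin n) :=
  LinearIsometryEquiv.piLpCongrRight 2 fun i =>
    if a i = 1 then LinearIsometryEquiv.neg ℝ else LinearIsometryEquiv.refl ℝ ℝ

theorem signFlip_embZ (a : Fin n → ZMod 2) (m : Fin n → ℤ) :
    signFlip a (embZ m) = embZ fun i => if a i = 1 then -m i else m i := by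
  ext i
  by_cases h : a i = 1 <;> simp [signFlip, embZ, h]

theorem signFlip_signFlip (a : Fin n → ZMod 2) (v : EuclideanSpace ℝ (Fin n)) :
    signFlip a (signFlip a v) = v := by
  ext i
  by_cases h : a i = 1 <;> simp [signFlip, h]

noncomputable def signFlipAdd (a : Fin n → ZMod 2) (x : EuclideanSpace ℝ (Fin n)) :
    EuclideanSpace ℝ (Fin n) ≃ᵢ EuclideanSpace ℝ (Fin n) :=
  (signFlip a).toIsometryEquiv.trans (IsometryEquiv.addRight x)

theorem signFlipAdd_apply (a : Fin n → ZMod 2) (x v : EuclideanSpace ℝ (Fin n)) :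
    signFlipAdd a x v = signFlip a v + x := rfl

variable {a₁ a₂ : Fin n → ZMod 2} {mx : Fin n → ℤ}

theorem signFlip_add_embZ_mem_gammaC2 (ha₁ : a₁ ∈ C₁) (ha₂ : a₂ ∈ C₂)
    (hmx : ∀ i, (mx i : ZMod 4) = digits (a₁ i) (a₂ i)) {v : EuclideanSpace ℝ (Fin n)}
    (hv : v ∈ gammaC2 C₁ C₂) : signFlip a₁ v + embZ mx ∈ gammaC2 C₁ C₂ := by
  obtain ⟨c₁, hc₁, c₂, hc₂, m, rfl, hm⟩ := mem_gammaC2_iff.1 hv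
  refine mem_gammaC2_iff.2 ⟨c₁ + a₁, add_mem hc₁ ha₁, c₂ + a₂, add_mem hc₂ ha₂, _,
    by rw [signFlip_embZ, ← embZ_add], fun i => ?_⟩
  simp only [Pi.add_apply, Int.cast_add, apply_ite (Int.cast : ℤ → ZMod 4), Int.cast_neg, hm i,
    hmx i]
  exact ite_neg_digits_add_digits _ _ _ _

theorem signFlip_sub_embZ_mem_gammaC2 (ha₁ : a₁ ∈ C₁) (ha₂ : a₂ ∈ C₂)
    (hmx : ∀ i, (mx i : ZMod 4) = digits (a₁ i) (a₂ i)) {v : EuclideanSpace ℝ (Fin n)}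
    (hv : v ∈ gammaC2 C₁ C₂) : signFlip a₁ (v - embZ mx) ∈ gammaC2 C₁ C₂ := by
  obtain ⟨c₁, hc₁, c₂, hc₂, m, rfl, hm⟩ := mem_gammaC2_iff.1 hv
  refine mem_gammaC2_iff.2 ⟨c₁ + a₁, add_mem hc₁ ha₁, c₂ + a₂, add_mem hc₂ ha₂, _,
    by rw [← embZ_sub, signFlip_embZ], fun i => ?_⟩
  simp only [Pi.sub_apply, apply_ite (Int.cast : ℤ → ZMod 4), Int.cast_neg, Int.cast_sub, hm i,
    hmx i]
  exact ite_neg_digits_sub_digits _ _ _ _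

theorem signFlipAdd_image_gammaC2 (ha₁ : a₁ ∈ C₁) (ha₂ : a₂ ∈ C₂)
    (hmx : ∀ i, (mx i : ZMod 4) = digits (a₁ i) (a₂ i)) :
    signFlipAdd a₁ (embZ mx) '' gammaC2 C₁ C₂ = gammaC2 C₁ C₂ := by
  refine subset_antisymm ?_ fun w hw => ⟨_, signFlip_sub_embZ_mem_gammaC2 ha₁ ha₂ hmx hw, ?_⟩
  · rintro _ ⟨v, hv, rfl⟩
    exact signFlip_add_embZ_mem_gammaC2 ha₁ ha₂ hmx hv
  · rw [signFlipAdd_apply, signFlip_signFlip, sub_add_cancel]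

end

/-- Every 2-level Construction C constellation `Γ_C = ψ(C₁) + 2ψ(C₂) + 4ℤ^n` built from
linear binary codes is geometrically uniform. -/
theorem constructionC_two_level_geometricallyUniform {n : ℕ}
    (C₁ C₂ : Submodule (ZMod 2) (Fin n → ZMod 2)) :
    ∀ x ∈ gammaC2 C₁ C₂, ∀ y ∈ gammaC2 C₁ C₂,
      ∃ T : EuclideanSpace ℝ (Fin n) ≃ᵢ EuclideanSpace ℝ (Fin n),
        T x = y ∧ T '' gammaC2 C₁ C₂ = gammaC2 C₁ C₂ := by
  refine exists_isometryEquiv_image_eq_of_basepoint 0 fun x hx => ?_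
  obtain ⟨a₁, ha₁, a₂, ha₂, mx, rfl, hmx⟩ := mem_gammaC2_iff.1 hx
  exact ⟨signFlipAdd a₁ (embZ mx), by simp [signFlipAdd_apply],
    signFlipAdd_image_gammaC2 ha₁ ha₂ hmx⟩
end

section
/- (Kositwattanarerk–Oggier specialization for 2 levels.) Let C_1 ⊆ C_2 ⊆ F_2^n be nested linear binary codes such that a * b ∈ C_2 for all a, b ∈ C_1 (Schur-product closure). Then the 2-level Construction C constellation Γ_C = ψ(C_1) + 2ψ(C_2) + 4Z^n is an additive subgroup of Z^n (a lattice). -/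
lemma psiZ_add {n : ℕ} (a b : Fin n → ZMod 2) :
    psiZ a + psiZ b = psiZ (a + b) + 2 • psiZ (a * b) := by
  funext i
  simp only [psiZ, Pi.add_apply, Pi.smul_apply, Pi.mul_apply, smul_eq_mul]
  have : ∀ x y : ZMod 2, (x.val : ℤ) + y.val = ((x + y).val : ℤ) + 2 * ((x * y).val) := by
    decide
  exact this (a i) (b i)

/-- Kositwattanarerk–Oggier specialization for 2 levels: if `C₁ ⊆ C₂ ⊆ F_2^n` are
nested linear binary codes with `a * b ∈ C₂` for all `a, b ∈ C₁` (Schur-product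
closure), then `Γ_C = ψ(C₁) + 2ψ(C₂) + 4ℤ^n` is an additive subgroup of `ℤ^n`. -/
theorem constructionC_two_level_lattice_of_schur_closed {n : ℕ}
    (C₁ C₂ : Submodule (ZMod 2) (Fin n → ZMod 2))
    (hnested : C₁ ≤ C₂)
    (hschur : ∀ a ∈ C₁, ∀ b ∈ C₁, a * b ∈ C₂) :
    ∃ G : AddSubgroup (Fin n → ℤ),
      (G : Set (Fin n → ℤ)) =
        {x | ∃ c₁ ∈ C₁, ∃ c₂ ∈ C₂, ∃ z : Fin n → ℤ,
              x = psiZ c₁ + 2 • psiZ c₂ + 4 • z} := by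
  refine ⟨{
    carrier := {x | ∃ c₁ ∈ C₁, ∃ c₂ ∈ C₂, ∃ z : Fin n → ℤ,
              x = psiZ c₁ + 2 • psiZ c₂ + 4 • z}
    zero_mem' := ⟨0, C₁.zero_mem, 0, C₂.zero_mem, 0, by simp [psiZ_zero]⟩
    add_mem' := ?_
    neg_mem' := ?_}, rfl⟩
  · rintro x y ⟨a₁, ha₁, a₂, ha₂, z, rfl⟩ ⟨b₁, hb₁, b₂, hb₂, w, rfl⟩
    refine ⟨a₁ + b₁, C₁.add_mem ha₁ hb₁, a₁ * b₁ + a₂ + b₂,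
      C₂.add_mem (C₂.add_mem (hschur a₁ ha₁ b₁ hb₁) ha₂) hb₂,
      z + w + psiZ ((a₁ * b₁) * a₂) + psiZ (((a₁ * b₁) + a₂) * b₂), ?_⟩
    have h1 := psiZ_add a₁ b₁
    have h2 := psiZ_add (a₁ * b₁) a₂
    have h3 := psiZ_add ((a₁ * b₁) + a₂) b₂
    have key : psiZ a₁ + psiZ b₁ + 2 • (psiZ a₂ + psiZ b₂) =
        psiZ (a₁ + b₁) + 2 • psiZ (a₁ * b₁ + a₂ + b₂)
          + 4 • (psiZ ((a₁ * b₁) * a₂) + psiZ (((a₁ * b₁) + a₂) * b₂)) := by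
      rw [h1]
      have : psiZ (a₁ * b₁ + a₂ + b₂) = psiZ (a₁ * b₁ + a₂) + psiZ b₂
          - 2 • psiZ (((a₁ * b₁) + a₂) * b₂) := by
        rw [h3]; abel
      rw [this]
      have : psiZ (a₁ * b₁ + a₂) = psiZ (a₁ * b₁) + psiZ a₂
          - 2 • psiZ ((a₁ * b₁) * a₂) := by
        rw [h2]; abel
      rw [this]
      module
    calc psiZ a₁ + 2 • psiZ a₂ + 4 • z + (psiZ b₁ + 2 • psiZ b₂ + 4 • w)
        = psiZ a₁ + psiZ b₁ + 2 • (psiZ a₂ + psiZ b₂) + 4 • (z + w) := by module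
      _ = _ := by rw [key]; module
  · rintro x ⟨c₁, hc₁, c₂, hc₂, z, rfl⟩
    refine ⟨c₁, hc₁, c₁ + c₂, C₂.add_mem (hnested hc₁) hc₂,
      -(psiZ (c₁ + c₂) + psiZ (c₁ * c₂) + z), ?_⟩
    have h := psiZ_add c₁ c₂
    have : psiZ c₂ = psiZ (c₁ + c₂) + 2 • psiZ (c₁ * c₂) - psiZ c₁ := by
      rw [← h]; abel
    rw [this]
    module
end

section
/- (Latticeness forces Schur closure, 2 levels.) If C_1, C_2 ⊆ F_2^n are linear binary codes and Γ_C = ψ(C_1) + 2ψ(C_2) + 4Z^n is an additive subgroup of Z^n, then for all a, b ∈ C_1, the Schur product a * b belongs to C_2; in particular C_1 ⊆ C_2. -/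
lemma mod2_eq {x y : ZMod 2} {k : ℤ} (h : (x.val : ℤ) = (y.val : ℤ) + 2 * k) :
    x = y := by
  have h2 := congrArg (Int.cast : ℤ → ZMod 2) h
  push_cast at h2
  simpa [ZMod.natCast_val, ZMod.cast_id, show ((2:ℤ):ZMod 2) = 0 by decide, show (2:ZMod 2) = 0 by decide] using h2

lemma two_apply {n : ℕ} (i : Fin n) : (2 : Fin n → ℤ) i = 2 := rfl
lemma four_apply {n : ℕ} (i : Fin n) : (4 : Fin n → ℤ) i = 4 := rfl

/-- Latticeness forces Schur closure (2 levels): if `C₁, C₂ ⊆ F_2^n` are linear binary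
codes and `Γ_C = ψ(C₁) + 2ψ(C₂) + 4ℤ^n` is an additive subgroup of `ℤ^n`, then
`a * b ∈ C₂` for all `a, b ∈ C₁`; in particular `C₁ ⊆ C₂`. -/
theorem schur_closed_of_constructionC_two_level_lattice {n : ℕ}
    (C₁ C₂ : Submodule (ZMod 2) (Fin n → ZMod 2))
    (hlat : ∃ G : AddSubgroup (Fin n → ℤ),
      (G : Set (Fin n → ℤ)) =
        {x | ∃ c₁ ∈ C₁, ∃ c₂ ∈ C₂, ∃ z : Fin n → ℤ,
              x = psiZ c₁ + 2 • psiZ c₂ + 4 • z}) :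
    (∀ a ∈ C₁, ∀ b ∈ C₁, a * b ∈ C₂) ∧ C₁ ≤ C₂ := by
  obtain ⟨G, hG⟩ := hlat
  have hmem : ∀ x : Fin n → ℤ, x ∈ G ↔ ∃ c₁ ∈ C₁, ∃ c₂ ∈ C₂, ∃ z : Fin n → ℤ,
      x = psiZ c₁ + 2 • psiZ c₂ + 4 • z := by
    intro x
    rw [← SetLike.mem_coe, hG]; rfl
  have key : ∀ a ∈ C₁, ∀ b ∈ C₁, a * b ∈ C₂ := by
    intro a ha b hb
    have hψ : ∀ c : Fin n → ZMod 2, c ∈ C₁ → psiZ c ∈ G := by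
      intro c hc
      rw [hmem]
      exact ⟨c, hc, 0, zero_mem _, 0, by simp [psiZ_zero]⟩
    have hsum : psiZ a + psiZ b ∈ G := add_mem (hψ a ha) (hψ b hb)
    rw [hmem] at hsum
    obtain ⟨c₁, hc₁, c₂, hc₂, z, heq⟩ := hsum
    -- carry identity
    have hcarry : psiZ a + psiZ b = psiZ (a + b) + 2 • psiZ (a * b) := by
      funext i
      have : ∀ x y : ZMod 2, (x : ZMod 2).val + y.val = (x + y).val + 2 * (x * y).val := by
        decide
      have h := this (a i) (b i)
      simp only [Pi.add_apply, Pi.smul_apply, Pi.mul_apply, psiZ]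
      simp only [nsmul_eq_mul, smul_eq_mul]
      push_cast
      exact_mod_cast h
    rw [hcarry] at heq
    -- mod 2: a + b = c₁
    have hab : a + b = c₁ := by
      funext i
      have hi := congrFun heq i
      simp only [Pi.add_apply, Pi.smul_apply, Pi.mul_apply, psiZ] at hi
      simp only [nsmul_eq_mul, smul_eq_mul] at hi
      push_cast at hi
      show (a i + b i) = c₁ i
      apply mod2_eq (k := (c₂ i).val + 2 * z i - (a i * b i).val)
      linarith
    rw [hab] at heq
    have heq2 : psiZ (a * b) = psiZ c₂ + 2 • z := by
      have h2 : (2 : ℤ) • psiZ (a * b) = 2 • (psiZ c₂ + 2 • z) := by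
        funext i
        have hi := congrFun heq i
        simp only [Pi.add_apply, Pi.smul_apply, Pi.mul_apply, psiZ] at hi ⊢
        simp only [nsmul_eq_mul, smul_eq_mul] at hi ⊢
        push_cast at hi ⊢
        linarith
      exact smul_right_injective (Fin n → ℤ) (by norm_num) h2
    have : a * b = c₂ := by
      funext i
      have hi := congrFun heq2 i
      simp only [Pi.add_apply, Pi.smul_apply, Pi.mul_apply, psiZ] at hi
      simp only [nsmul_eq_mul, smul_eq_mul] at hi
      push_cast at hi
      exact mod2_eq (k := z i) hi
    rw [this]; exact hc₂
  refine ⟨key, fun a ha => ?_⟩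
  have := key a ha a ha
  have haa : a * a = a := by
    funext i
    have : ∀ x : ZMod 2, x * x = x := by decide
    exact this (a i)
  rwa [haa] at this
end
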